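/- arXiv:1001.5176 — 2 statements merged into one kernel-verified Lean document; each statement's English description precedes it below -/
import Mathlib

section
/- Suppose w_j > 0 for all j ∈ {1,…,p}. Let β_weight be any weighted Lasso solution, S_weight := {j : (β_weight)_j ≠ 0}, let S₀ ⊆ {1,…,p} be an index set with s₀ := |S₀| ≥ 1, and suppose |S_weight∖S₀| > s₀. Let Λ_s ≥ 0 satisfy ‖Xγ‖_n ≤ Λ_s‖γ‖_2 for every γ ∈ ℝ^p supported on an index set of cardinality at most s₀. Then |S_weight∖S₀| ≤ 8Λ_s² · (‖Xβ_weight − f⁰‖_n²/(λ_weight²·s₀)) · (Σ_{j∈S_weight∖S₀} w_j^{−2})/λ_init². -/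
/-!
Where the weighted Lasso solution `β` is nonzero the objective is differentiable along the
coordinate, so stationarity gives `|(Xᵀ(Xβ - f⁰))_j| = n λ w_j / 2` with `λ = λ_init λ_weight`.
Let `T` be the `s₀` false positives with the largest weights and test the residual against
`γ_j = (Xᵀ(Xβ - f⁰))_j / w_j²` on `T`: then `⟨Xγ, Xβ - f⁰⟩ = s₀ (nλ/2)²` and
`‖γ‖² = (nλ/2)² Σ_T w_j⁻²`, so Cauchy–Schwarz and the sparse eigenvalue bound give
`s₀² λ² ≤ 4 Λ² ‖Xβ - f⁰‖_n² Σ_T w_j⁻²`. Since `T` carries the smallest values of `w⁻²`,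
`Σ_T w⁻² ≤ s₀ / |S_w \ S₀| · Σ_{S_w \ S₀} w⁻²`, which yields the bound even with `4` in place
of `8`.
-/

open Finset Matrix

theorem Finset.exists_subset_card_eq_forall_le {α β : Type*} [DecidableEq α] [LinearOrder β]
    (s : Finset α) (f : α → β) {k : ℕ} (hk : k ≤ #s) :
    ∃ t ⊆ s, #t = k ∧ ∀ i ∈ t, ∀ j ∈ s \ t, f i ≤ f j := by
  induction k with
  | zero => exact ⟨∅, empty_subset _, rfl, by simp⟩
  | succ k ih =>
    obtain ⟨t, hts, htk, hmin⟩ := ih (Nat.le_of_succ_le hk)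
    obtain ⟨a, ha, hamin⟩ := exists_min_image (s \ t) f (by
      rw [← card_pos, card_sdiff_of_subset hts]
      omega)
    have hat := (mem_sdiff.1 ha).2
    refine ⟨insert a t, insert_subset (mem_sdiff.1 ha).1 hts,
      by rw [card_insert_of_notMem hat, htk], fun i hi j hj => ?_⟩
    have hj' : j ∈ s \ t := by grind
    rcases mem_insert.1 hi with rfl | hit
    · exact hamin j hj'
    · exact hmin i hit j hj'

theorem Finset.card_mul_sum_le_card_mul_sum_of_forall_le {α R : Type*} [DecidableEq α]
    [CommRing R] [LinearOrder R] [IsStrictOrderedRing R] {s t : Finset α} {f : α → R}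
    (hts : t ⊆ s) (h : ∀ i ∈ t, ∀ j ∈ s \ t, f i ≤ f j) :
    #s * ∑ i ∈ t, f i ≤ #t * ∑ i ∈ s, f i := by
  have hcross : #(s \ t) * ∑ i ∈ t, f i ≤ #t * ∑ j ∈ s \ t, f j := by
    simpa [sum_const, mul_sum] using
      sum_le_sum fun i hi => sum_le_sum fun j hj => h i hi j hj
  rw [← card_sdiff_add_card_eq_card hts, ← sum_sdiff hts]
  push_cast
  linarith

theorem Finset.exists_subset_card_eq_card_mul_sum_le {α R : Type*} [DecidableEq α]
    [CommRing R] [LinearOrder R] [IsStrictOrderedRing R] (s : Finset α) (f : α → R) {k : ℕ}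
    (hk : k ≤ #s) : ∃ t ⊆ s, #t = k ∧ #s * ∑ i ∈ t, f i ≤ k * ∑ i ∈ s, f i := by
  obtain ⟨t, hts, htk, hmin⟩ := s.exists_subset_card_eq_forall_le f hk
  exact ⟨t, hts, htk, htk ▸ card_mul_sum_le_card_mul_sum_of_forall_le hts hmin⟩

section
variable {m κ : Type*} [Fintype m] [Fintype κ]

/-- With `N = n` and `μ = λ_init λ_weight` this is `‖Xβ - y‖_n² + λ_init λ_weight Σ_j w_j |β_j|`. -/
noncomputable def weightedLassoObjective (X : Matrix m κ ℝ) (y : m → ℝ) (w : κ → ℝ) (N μ : ℝ)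
    (β : κ → ℝ) : ℝ :=
  (∑ i, (X *ᵥ β - y) i ^ 2) / N + μ * ∑ k, w k * |β k|

theorem weightedLassoObjective_add_single [DecidableEq κ] (X : Matrix m κ ℝ) (y : m → ℝ)
    (w : κ → ℝ) (N μ : ℝ) (β : κ → ℝ) (j : κ) (t : ℝ) :
    weightedLassoObjective X y w N μ (β + Pi.single j t) =
      weightedLassoObjective X y w N μ β
        + (2 * t * (Xᵀ *ᵥ (X *ᵥ β - y)) j + t ^ 2 * ∑ i, X i j ^ 2) / N
        + μ * w j * (|β j + t| - |β j|) := by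
  have hloss : ∑ i, (X *ᵥ (β + Pi.single j t) - y) i ^ 2 =
      ∑ i, (X *ᵥ β - y) i ^ 2 + (2 * t * (Xᵀ *ᵥ (X *ᵥ β - y)) j + t ^ 2 * ∑ i, X i j ^ 2) := by
    simp only [mulVec_add, mulVec_single, Pi.sub_apply, Pi.add_apply, Pi.smul_apply, col_apply,
      mulVec, dotProduct, transpose_apply, op_smul_eq_mul, mul_sum, ← sum_add_distrib]
    exact sum_congr rfl fun i _ => by ring
  have hpen : ∑ k, w k * |(β + Pi.single j t : κ → ℝ) k| =
      ∑ k, w k * |β k| + w j * (|β j + t| - |β j|) := by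
    rw [← sub_eq_iff_eq_add', ← sum_sub_distrib, sum_eq_single j]
    · simp [mul_sub]
    · intro k _ hk
      simp [hk]
    · simp
  rw [weightedLassoObjective, weightedLassoObjective, hloss, hpen]
  ring

theorem weightedLassoObjective_stationary (X : Matrix m κ ℝ) (y : m → ℝ)
    (w : κ → ℝ) (N μ : ℝ) {β : κ → ℝ}
    (hmin : ∀ β', weightedLassoObjective X y w N μ β ≤ weightedLassoObjective X y w N μ β')
    {j : κ} (hj : β j ≠ 0) :
    2 * (Xᵀ *ᵥ (X *ᵥ β - y)) j / N + μ * w j * SignType.sign (β j) = 0 := by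
  classical
  set c := (Xᵀ *ᵥ (X *ᵥ β - y)) j
  set B := ∑ i, X i j ^ 2
  have hline : IsLocalMin (fun t => weightedLassoObjective X y w N μ (β + Pi.single j t)) 0 :=
    Filter.Eventually.of_forall fun t => by simpa using hmin _
  have habs : HasDerivAt (fun t => |β j + t|) (SignType.sign (β j)) 0 := by
    simpa using (hasDerivAt_abs (by simpa using hj)).comp_const_add (β j) 0
  have hquad :=
    (((hasDerivAt_id (0 : ℝ)).const_mul 2).mul_const c).add ((hasDerivAt_pow 2 (0 : ℝ)).mul_const B)
  refine hline.hasDerivAt_eq_zero ?_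
  rw [funext (weightedLassoObjective_add_single X y w N μ β j)]
  refine (((hquad.div_const N).const_add _).add ((habs.sub_const _).const_mul _)).congr_deriv ?_
  simp

theorem weightedLassoObjective_stationary_sq (X : Matrix m κ ℝ) (y : m → ℝ)
    (w : κ → ℝ) {N : ℝ} (μ : ℝ) (hN : N ≠ 0) {β : κ → ℝ}
    (hmin : ∀ β', weightedLassoObjective X y w N μ β ≤ weightedLassoObjective X y w N μ β')
    {j : κ} (hj : β j ≠ 0) :
    (Xᵀ *ᵥ (X *ᵥ β - y)) j ^ 2 = (N * μ / 2 * w j) ^ 2 := by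
  have h := weightedLassoObjective_stationary X y w N μ hmin hj
  have hsign : (SignType.sign (β j) : ℝ) ^ 2 = 1 := by
    rcases hj.lt_or_gt with h' | h' <;> simp [h']
  have hc : (Xᵀ *ᵥ (X *ᵥ β - y)) j = -(N * μ / 2 * w j * SignType.sign (β j)) := by
    field_simp at h
    linarith
  rw [hc, neg_sq, mul_pow, hsign, mul_one]

theorem card_mul_sq_le_of_sparse_bound (X : Matrix m κ ℝ) (r : m → ℝ) (w : κ → ℝ)
    {T : Finset κ} {a L : ℝ} (hL : 0 ≤ L) (hw : ∀ j ∈ T, w j ≠ 0)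
    (hc : ∀ j ∈ T, (Xᵀ *ᵥ r) j ^ 2 = (a * w j) ^ 2)
    (hX : ∀ γ : κ → ℝ, (∀ j ∉ T, γ j = 0) → ∑ i, (X *ᵥ γ) i ^ 2 ≤ L * ∑ j, γ j ^ 2) :
    ((#T : ℝ) * a) ^ 2 ≤ L * (∑ j ∈ T, (w j)⁻¹ ^ 2) * ∑ i, r i ^ 2 := by
  classical
  set W := ∑ j ∈ T, (w j)⁻¹ ^ 2
  set R := ∑ i, r i ^ 2
  set γ : κ → ℝ := fun j => if j ∈ T then (Xᵀ *ᵥ r) j / w j ^ 2 else 0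
  have hγ : ∀ j ∉ T, γ j = 0 := fun j hj => if_neg hj
  have hinner : ∑ i, (X *ᵥ γ) i * r i = #T * a ^ 2 := by
    calc ∑ i, (X *ᵥ γ) i * r i = ∑ j, (Xᵀ *ᵥ r) j * γ j := by
          rw [← dotProduct, dotProduct_comm, dotProduct_mulVec, ← mulVec_transpose, dotProduct]
      _ = ∑ j ∈ T, a ^ 2 := by
          rw [← sum_subset (subset_univ T) fun j _ hj => by simp [hγ j hj]]
          refine sum_congr rfl fun j hj => ?_
          simp only [γ, if_pos hj]
          rw [mul_div_assoc', ← sq, hc j hj, mul_pow,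
            mul_div_cancel_right₀ _ (pow_ne_zero 2 (hw j hj))]
      _ = #T * a ^ 2 := by rw [sum_const, nsmul_eq_mul]
  have hnorm : ∑ j, γ j ^ 2 = a ^ 2 * W := by
    rw [← sum_subset (subset_univ T) fun j _ hj => by simp [hγ j hj], mul_sum]
    refine sum_congr rfl fun j hj => ?_
    simp only [γ, if_pos hj]
    rw [div_pow, hc j hj]
    field_simp [hw j hj]
  have hCS : (#T * a ^ 2) ^ 2 ≤ L * (a ^ 2 * W) * R := by
    calc (#T * a ^ 2) ^ 2 = (∑ i, (X *ᵥ γ) i * r i) ^ 2 := by rw [hinner]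
      _ ≤ (∑ i, (X *ᵥ γ) i ^ 2) * R := sum_mul_sq_le_sq_mul_sq _ _ _
      _ ≤ L * (a ^ 2 * W) * R := by
          rw [← hnorm]
          exact mul_le_mul_of_nonneg_right (hX γ hγ) (sum_nonneg fun i _ => sq_nonneg _)
  rcases (sq_nonneg a).eq_or_lt with ha | ha
  · rw [mul_pow, ← ha, mul_zero]
    exact mul_nonneg (mul_nonneg hL (by positivity)) (by positivity)
  · exact le_of_mul_le_mul_right (by linear_combination hCS) ha

theorem card_mul_card_mul_sq_le_of_sparse_bound [DecidableEq κ] (X : Matrix m κ ℝ) (r : m → ℝ)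
    (w : κ → ℝ) {S : Finset κ} {k : ℕ} {a L : ℝ} (hk : 0 < k) (hkS : k ≤ #S) (hL : 0 ≤ L)
    (hw : ∀ j ∈ S, w j ≠ 0) (hc : ∀ j ∈ S, (Xᵀ *ᵥ r) j ^ 2 = (a * w j) ^ 2)
    (hX : ∀ T ⊆ S, #T = k → ∀ γ : κ → ℝ, (∀ j ∉ T, γ j = 0) →
      ∑ i, (X *ᵥ γ) i ^ 2 ≤ L * ∑ j, γ j ^ 2) :
    #S * k * a ^ 2 ≤ L * (∑ j ∈ S, (w j)⁻¹ ^ 2) * ∑ i, r i ^ 2 := by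
  obtain ⟨T, hTS, hTk, hTavg⟩ := S.exists_subset_card_eq_card_mul_sum_le (fun j => (w j)⁻¹ ^ 2) hkS
  have hT := card_mul_sq_le_of_sparse_bound X r w hL (fun j hj => hw j (hTS hj))
    (fun j hj => hc j (hTS hj)) (hX T hTS hTk)
  rw [hTk] at hT
  have hk' : (0 : ℝ) < k := by exact_mod_cast hk
  have hLR : 0 ≤ L * ∑ i, r i ^ 2 := mul_nonneg hL (sum_nonneg fun i _ => sq_nonneg _)
  refine le_of_mul_le_mul_left ?_ hk'
  nlinarith [mul_le_mul_of_nonneg_left hTavg hLR,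
    mul_le_mul_of_nonneg_left hT (Nat.cast_nonneg (α := ℝ) #S)]

end

theorem le_mul_sq_mul_of_sqrt_div_le {A B N Λ : ℝ} (hN : 0 < N) (hA : 0 ≤ A) (hB : 0 ≤ B)
    (h : √(A / N) ≤ Λ * √B) : A ≤ N * Λ ^ 2 * B := by
  have h2 := pow_le_pow_left₀ (Real.sqrt_nonneg _) h 2
  rw [Real.sq_sqrt (by positivity), mul_pow, Real.sq_sqrt hB, div_le_iff₀ hN] at h2
  linarith

theorem weighted_lasso_false_positives_sparse_general
    (n p : ℕ) (hn : 0 < n)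
    (X : Matrix (Fin n) (Fin p) ℝ) (f0 : Fin n → ℝ)
    (w : Fin p → ℝ) (hw : ∀ j, 0 < w j)
    (lamInit lamWeight : ℝ) (hlamInit : 0 < lamInit) (hlamWeight : 0 < lamWeight)
    (βw : Fin p → ℝ)
    (hβw : ∀ β : Fin p → ℝ,
      (∑ i, (X.mulVec βw i - f0 i) ^ 2) / n + lamInit * lamWeight * ∑ j, w j * |βw j|
        ≤ (∑ i, (X.mulVec β i - f0 i) ^ 2) / n + lamInit * lamWeight * ∑ j, w j * |β j|)
    (Sw : Finset (Fin p)) (hSw : ∀ j, j ∈ Sw ↔ βw j ≠ 0)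
    (S0 : Finset (Fin p)) (hS0 : 1 ≤ S0.card)
    (hmany : S0.card < (Sw \ S0).card)
    (Λs : ℝ)
    (hΛs : ∀ T : Finset (Fin p), T.card ≤ S0.card →
      ∀ γ : Fin p → ℝ, (∀ j ∉ T, γ j = 0) →
      Real.sqrt ((∑ i, (X.mulVec γ i) ^ 2) / n) ≤ Λs * Real.sqrt (∑ j, (γ j) ^ 2)) :
    ((Sw \ S0).card : ℝ)
      ≤ 8 * Λs ^ 2 * (((∑ i, (X.mulVec βw i - f0 i) ^ 2) / n) / (lamWeight ^ 2 * S0.card))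
          * (∑ j ∈ Sw \ S0, ((w j)⁻¹) ^ 2) / lamInit ^ 2 := by
  classical
  have hn' : (0 : ℝ) < n := by exact_mod_cast hn
  have hkkt : ∀ j ∈ Sw \ S0,
      (Xᵀ *ᵥ (X *ᵥ βw - f0)) j ^ 2 = (n * (lamInit * lamWeight) / 2 * w j) ^ 2 :=
    fun j hj => weightedLassoObjective_stationary_sq X f0 w _ hn'.ne' hβw
      ((hSw j).1 (sdiff_subset hj))
  have hsparse (T : Finset (Fin p)) (_ : T ⊆ Sw \ S0) (hT : #T = #S0) (γ : Fin p → ℝ)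
      (hγ : ∀ j ∉ T, γ j = 0) : ∑ i, (X *ᵥ γ) i ^ 2 ≤ n * Λs ^ 2 * ∑ j, γ j ^ 2 :=
    le_mul_sq_mul_of_sqrt_div_le hn' (sum_nonneg fun i _ => sq_nonneg _)
      (sum_nonneg fun j _ => sq_nonneg _) (hΛs T hT.le γ hγ)
  have key := card_mul_card_mul_sq_le_of_sparse_bound X (X *ᵥ βw - f0) w hS0 hmany.le
    (by positivity) (fun j _ => (hw j).ne') hkkt hsparse
  simp only [Pi.sub_apply] at key
  set R := ∑ i, (X.mulVec βw i - f0 i) ^ 2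
  set WS := ∑ j ∈ Sw \ S0, (w j)⁻¹ ^ 2
  have hs0 : (0 : ℝ) < #S0 := by exact_mod_cast hS0
  have hWR : 0 ≤ Λs ^ 2 * R * WS := by positivity
  rw [show 8 * Λs ^ 2 * (R / n / (lamWeight ^ 2 * #S0)) * WS / lamInit ^ 2
      = 8 * Λs ^ 2 * R * WS / (#S0 * n * (lamInit * lamWeight) ^ 2) by ring,
    le_div_iff₀ (by positivity)]
  refine le_of_mul_le_mul_left ?_ hn'
  nlinarith [mul_nonneg hn'.le hWR]

/-- Second part of Lemma `weightselect`: sharper bound on the number of false positives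
of the noiseless weighted Lasso when there are more than `s₀` of them. -/
theorem weighted_lasso_false_positives_sparse
    (n p : ℕ) (hn : 0 < n)
    (X : Matrix (Fin n) (Fin p) ℝ) (f0 : Fin n → ℝ)
    (w : Fin p → ℝ) (hw : ∀ j, 0 < w j)
    (lamInit lamWeight : ℝ) (hlamInit : 0 < lamInit) (hlamWeight : 0 < lamWeight)
    (βw : Fin p → ℝ)
    (hβw : ∀ β : Fin p → ℝ,
      (∑ i, (X.mulVec βw i - f0 i) ^ 2) / n + lamInit * lamWeight * ∑ j, w j * |βw j|
        ≤ (∑ i, (X.mulVec β i - f0 i) ^ 2) / n + lamInit * lamWeight * ∑ j, w j * |β j|)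
    (Sw : Finset (Fin p)) (hSw : ∀ j, j ∈ Sw ↔ βw j ≠ 0)
    (S0 : Finset (Fin p)) (hS0 : 1 ≤ S0.card)
    (hmany : S0.card < (Sw \ S0).card)
    (Λs : ℝ) (hΛs0 : 0 ≤ Λs)
    (hΛs : ∀ T : Finset (Fin p), T.card ≤ S0.card →
      ∀ γ : Fin p → ℝ, (∀ j ∉ T, γ j = 0) →
      Real.sqrt ((∑ i, (X.mulVec γ i) ^ 2) / n) ≤ Λs * Real.sqrt (∑ j, (γ j) ^ 2)) :
    ((Sw \ S0).card : ℝ)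
      ≤ 8 * Λs ^ 2 * (((∑ i, (X.mulVec βw i - f0 i) ^ 2) / n) / (lamWeight ^ 2 * S0.card))
          * (∑ j ∈ Sw \ S0, ((w j)⁻¹) ^ 2) / lamInit ^ 2 :=
  weighted_lasso_false_positives_sparse_general n p hn X f0 w hw lamInit lamWeight hlamInit
    hlamWeight βw hβw Sw hSw S0 hS0 hmany Λs hΛs
end

section
/- Let S₀ ⊆ {1,…,p} be nonempty with s₀ := |S₀|, and let b⁰ ∈ ℝ^p be supported on S₀ with Xb⁰ the orthogonal projection of f⁰ onto span{ψ_j : j ∈ S₀}. Let β ∈ ℝ^p, set δ₂ := ‖β − b⁰‖_2, let δ > 0, S^δ := {j : |β_j| > δ}, and let f_{S^δ} denote the orthogonal projection of f⁰ onto span{ψ_j : j ∈ S^δ}. Let Λ_s ≥ 0 satisfy ‖Xγ‖_n ≤ Λ_s‖γ‖_2 for every γ ∈ ℝ^p supported on an index set of cardinality at most s₀. Then ‖f_{S^δ} − f⁰‖_n ≤ ‖Xβ_{S^δ} − f⁰‖_n ≤ ‖Xb⁰ − f⁰‖_n + √⌈δ₂²/(δ²·s₀) + 1⌉ · Λ_s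 · (2δ₂ + δ√s₀). -/
/-! The first inequality is the best-approximation property of an orthogonal projection: the residual
`X c - f⁰` is orthogonal to `X (β_{S^δ} - c)`, so Pythagoras applies.

For the second, write `X β_{S^δ} - f⁰ = (X b⁰ - f⁰) + X γ` with `γ = β_{S^δ} - b⁰`, which is supported
on `S^δ ∪ S₀`. Every `j ∈ S^δ \ S₀` has `b⁰_j = 0` and `|β_j| > δ`, so it contributes more than `δ²`
to `δ₂²`; hence `|S^δ ∪ S₀| ≤ N s₀` with `N = ⌈δ₂²/(δ² s₀) + 1⌉`. Cutting `γ` into `N` blocks of at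
most `s₀` coordinates, the sparse eigenvalue bound and Cauchy–Schwarz give
`‖X γ‖_n ≤ √N Λ_s ‖γ‖₂`. Finally, coordinatewise `|γ_j| ≤ |β_j - b⁰_j| + δ 1[j ∈ S₀]`, so
`‖γ‖₂ ≤ δ₂ + δ √s₀`. -/

open Finset Matrix

lemma norm_toLp_eq_sqrt {ι : Type*} [Fintype ι] (v : ι → ℝ) :
    ‖WithLp.toLp 2 v‖ = √(∑ i, v i ^ 2) := by
  simp [EuclideanSpace.norm_eq]

lemma norm_toLp_le_of_abs_le {ι : Type*} [Fintype ι] {x y : ι → ℝ} (h : ∀ i, |x i| ≤ y i) :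
    ‖WithLp.toLp 2 x‖ ≤ ‖WithLp.toLp 2 y‖ := by
  simp only [norm_toLp_eq_sqrt]
  refine Real.sqrt_le_sqrt (sum_le_sum fun i _ => ?_)
  exact sq_le_sq' (neg_le_of_abs_le (h i)) (le_of_abs_le (h i))

lemma norm_toLp_indicator_const {ι : Type*} [Fintype ι] [DecidableEq ι] (S : Finset ι) {δ : ℝ}
    (hδ : 0 ≤ δ) : ‖WithLp.toLp 2 (fun j => if j ∈ S then δ else 0)‖ = √(#S) * δ := by
  simp [norm_toLp_eq_sqrt, sum_ite_mem, hδ]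

lemma norm_toLp_sq_eq_add_ite {ι : Type*} [Fintype ι] [DecidableEq ι] (A : Finset ι) (γ : ι → ℝ) :
    ‖WithLp.toLp 2 γ‖ ^ 2 = ‖WithLp.toLp 2 (fun j => if j ∈ A then γ j else 0)‖ ^ 2
      + ‖WithLp.toLp 2 (fun j => if j ∈ A then 0 else γ j)‖ ^ 2 := by
  simp only [norm_toLp_eq_sqrt, Real.sq_sqrt (sum_nonneg fun _ _ => sq_nonneg _), ← sum_add_distrib]
  refine sum_congr rfl fun j _ => ?_
  split_ifs <;> ring

lemma add_sqrt_mul_le_sqrt_add_one_mul {N : ℝ} (hN : 0 ≤ N) (a b : ℝ) :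
    a + √N * b ≤ √(N + 1) * √(a ^ 2 + b ^ 2) := by
  rw [← Real.sqrt_mul (by positivity)]
  refine le_trans (le_abs_self _) (Real.abs_le_sqrt ?_)
  nlinarith [sq_nonneg (√N * a - b), Real.sq_sqrt hN]

lemma le_sqrt_mul_of_sparse_le {ι : Type*} [Fintype ι] [DecidableEq ι] {q : (ι → ℝ) → ℝ}
    (hq : ∀ x y, q (x + y) ≤ q x + q y) {s : ℕ} {Λ : ℝ} (hΛ : 0 ≤ Λ)
    (h : ∀ T : Finset ι, #T ≤ s → ∀ γ : ι → ℝ, (∀ j ∉ T, γ j = 0) → q γ ≤ Λ * ‖WithLp.toLp 2 γ‖)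
    (N : ℕ) (T : Finset ι) (hT : #T ≤ N * s) (γ : ι → ℝ) (hγ : ∀ j ∉ T, γ j = 0) :
    q γ ≤ √N * Λ * ‖WithLp.toLp 2 γ‖ := by
  induction N generalizing T γ with
  | zero =>
    obtain rfl : T = ∅ := card_eq_zero.mp (by simpa using hT)
    obtain rfl : γ = 0 := funext fun j => hγ j (notMem_empty j)
    simpa using h ∅ (by simp) 0 (by simp)
  | succ N ih =>
    -- split off a block `A` of at most `s` coordinates; then Cauchy–Schwarz for `(1, √N) · (a, b)`
    obtain ⟨A, hAT, hA⟩ := exists_subset_card_eq (min_le_right s #T)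
    set γA : ι → ℝ := fun j => if j ∈ A then γ j else 0
    set γB : ι → ℝ := fun j => if j ∈ A then 0 else γ j
    have hγAB : γ = γA + γB := funext fun j => by by_cases hj : j ∈ A <;> simp [γA, γB, hj]
    have hBT : #(T \ A) ≤ N * s := by
      rw [card_sdiff_of_subset hAT, hA]; rw [Nat.succ_mul] at hT; omega
    have hB : ∀ j ∉ T \ A, γB j = 0 := fun j hj => by
      by_cases hjA : j ∈ A
      · simp [γB, hjA]
      · simp [γB, hjA, hγ j (by simpa [hjA] using hj)]
    calc q γ ≤ q γA + q γB := hγAB ▸ hq γA γB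
      _ ≤ Λ * ‖WithLp.toLp 2 γA‖ + √N * Λ * ‖WithLp.toLp 2 γB‖ :=
          add_le_add (h A (hA ▸ min_le_left _ _) γA fun j hj => if_neg hj) (ih _ hBT _ hB)
      _ = Λ * (‖WithLp.toLp 2 γA‖ + √N * ‖WithLp.toLp 2 γB‖) := by ring
      _ ≤ Λ * (√(N + 1) * √(‖WithLp.toLp 2 γA‖ ^ 2 + ‖WithLp.toLp 2 γB‖ ^ 2)) := by
          gcongr; exact add_sqrt_mul_le_sqrt_add_one_mul N.cast_nonneg _ _
      _ = √(N + 1 : ℕ) * Λ * ‖WithLp.toLp 2 γ‖ := by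
          rw [← norm_toLp_sq_eq_add_ite, Real.sqrt_sq (norm_nonneg _)]; push_cast; ring

lemma norm_threshold_sub_le {ι : Type*} [Fintype ι] [DecidableEq ι] {β b : ι → ℝ}
    {S S₀ : Finset ι} {δ : ℝ} (hδ : 0 ≤ δ) (hS : ∀ j ∉ S, |β j| ≤ δ) (hb : ∀ j ∉ S₀, b j = 0) :
    ‖WithLp.toLp 2 ((fun j => if j ∈ S then β j else 0) - b)‖
      ≤ ‖WithLp.toLp 2 (β - b)‖ + √(#S₀) * δ := by
  have hdom : ∀ j, |((fun j => if j ∈ S then β j else 0) - b) j|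
      ≤ |(β - b) j| + if j ∈ S₀ then δ else 0 := by
    intro j
    by_cases hjS : j ∈ S
    · simp only [hjS, Pi.sub_apply, if_true]
      split_ifs <;> linarith
    by_cases hj₀ : j ∈ S₀
    · simp only [hjS, hj₀, Pi.sub_apply, if_true, if_false, zero_sub, abs_neg]
      linarith [abs_sub_abs_le_abs_sub (b j) (β j), abs_sub_comm (β j) (b j), hS j hjS]
    · simp [hjS, hj₀, hb j hj₀]
  calc _ ≤ ‖WithLp.toLp 2 (fun j => |(β - b) j|) + WithLp.toLp 2 (fun j => if j ∈ S₀ then δ else 0)‖ :=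
        norm_toLp_le_of_abs_le hdom
    _ ≤ _ := norm_add_le _ _
    _ = _ := by simp only [norm_toLp_indicator_const S₀ hδ, norm_toLp_eq_sqrt, sq_abs]

lemma card_sdiff_mul_sq_le {ι : Type*} [Fintype ι] [DecidableEq ι] {β b : ι → ℝ}
    {S S₀ : Finset ι} {δ : ℝ} (hδ : 0 ≤ δ) (hS : ∀ j ∈ S, δ < |β j|) (hb : ∀ j ∉ S₀, b j = 0) :
    #(S \ S₀) * δ ^ 2 ≤ ‖WithLp.toLp 2 (β - b)‖ ^ 2 := by
  rw [norm_toLp_eq_sqrt, Real.sq_sqrt (sum_nonneg fun _ _ => sq_nonneg _), ← nsmul_eq_mul,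
    ← sum_const]
  calc ∑ _ ∈ S \ S₀, δ ^ 2 ≤ ∑ j ∈ S \ S₀, (β - b) j ^ 2 := sum_le_sum fun j hj => by
        obtain ⟨hjS, hj₀⟩ := mem_sdiff.mp hj
        simpa [hb j hj₀] using pow_le_pow_left₀ hδ (hS j hjS).le 2
    _ ≤ ∑ j, (β - b) j ^ 2 :=
        sum_le_sum_of_subset_of_nonneg (subset_univ _) fun _ _ _ => sq_nonneg _

lemma add_le_ceil_mul {k s : ℕ} {D δ : ℝ} (hδ : 0 < δ) (hs : 0 < s) (hk : k * δ ^ 2 ≤ D) :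
    k + s ≤ ⌈D / (δ ^ 2 * s) + 1⌉₊ * s := by
  have hs' : (0 : ℝ) < s := by exact_mod_cast hs
  suffices (k + s : ℝ) ≤ ⌈D / (δ ^ 2 * s) + 1⌉₊ * s by exact_mod_cast this
  calc (k + s : ℝ) = (k * δ ^ 2 / (δ ^ 2 * s) + 1) * s := by field_simp
    _ ≤ (D / (δ ^ 2 * s) + 1) * s := by gcongr
    _ ≤ ⌈D / (δ ^ 2 * s) + 1⌉₊ * s := by gcongr; exact Nat.le_ceil _

lemma norm_mulVec_sub_le_of_orthogonal {m ι : Type*} [Fintype m] [Fintype ι] (X : Matrix m ι ℝ)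
    (f : m → ℝ) {S : Finset ι} {c b : ι → ℝ} (hc : ∀ j ∉ S, c j = 0) (hb : ∀ j ∉ S, b j = 0)
    (horth : ∀ j ∈ S, ((X *ᵥ c - f) ᵥ* X) j = 0) :
    ‖WithLp.toLp 2 (X *ᵥ c - f)‖ ≤ ‖WithLp.toLp 2 (X *ᵥ b - f)‖ := by
  have hinner : inner ℝ (WithLp.toLp 2 (X *ᵥ (b - c))) (WithLp.toLp 2 (X *ᵥ c - f)) = 0 := by
    rw [EuclideanSpace.inner_toLp_toLp, star_trivial, dotProduct_mulVec]
    refine sum_eq_zero fun j _ => ?_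
    by_cases hj : j ∈ S
    · simp [horth j hj]
    · simp [hb j hj, hc j hj]
  have hpyth := norm_add_sq_eq_norm_sq_add_norm_sq_real hinner
  rw [← WithLp.toLp_add, mulVec_sub, sub_add_sub_cancel] at hpyth
  exact (mul_self_le_mul_self_iff (norm_nonneg _) (norm_nonneg _)).mpr (by nlinarith)

noncomputable def empNorm {n : ℕ} (v : Fin n → ℝ) : ℝ := √((∑ i, v i ^ 2) / n)

lemma empNorm_eq {n : ℕ} (v : Fin n → ℝ) : empNorm v = ‖WithLp.toLp 2 v‖ / √n := by
  rw [empNorm, Real.sqrt_div (sum_nonneg fun _ _ => sq_nonneg _), norm_toLp_eq_sqrt]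

lemma empNorm_add_le {n : ℕ} (u v : Fin n → ℝ) : empNorm (u + v) ≤ empNorm u + empNorm v := by
  simp only [empNorm_eq, ← add_div, WithLp.toLp_add]
  gcongr
  exact norm_add_le _ _

theorem thresholded_prediction_error_general
    (n p : ℕ)
    (X : Matrix (Fin n) (Fin p) ℝ) (f0 : Fin n → ℝ)
    (S0 : Finset (Fin p)) (hS0 : S0.Nonempty)
    (b0 : Fin p → ℝ)
    (hb0supp : ∀ j ∉ S0, b0 j = 0)
    (β : Fin p → ℝ)
    (δ2 : ℝ) (hδ2 : δ2 = Real.sqrt (∑ j, (β j - b0 j) ^ 2))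
    (δ : ℝ) (hδ : 0 < δ)
    (Sδ : Finset (Fin p)) (hSδ : ∀ j, j ∈ Sδ ↔ δ < |β j|)
    -- `X.mulVec c` is the orthogonal projection of `f0` onto `span {ψ_j : j ∈ Sδ}`
    (c : Fin p → ℝ)
    (hcsupp : ∀ j ∉ Sδ, c j = 0)
    (hcproj : ∀ j ∈ Sδ, ∑ i, (X.mulVec c i - f0 i) * X i j = 0)
    (Λs : ℝ) (hΛs0 : 0 ≤ Λs)
    (hΛs : ∀ T : Finset (Fin p), T.card ≤ S0.card →
      ∀ γ : Fin p → ℝ, (∀ j ∉ T, γ j = 0) →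
      Real.sqrt ((∑ i, (X.mulVec γ i) ^ 2) / n) ≤ Λs * Real.sqrt (∑ j, (γ j) ^ 2)) :
    Real.sqrt ((∑ i, (X.mulVec c i - f0 i) ^ 2) / n)
        ≤ Real.sqrt ((∑ i, (X.mulVec (fun j => if j ∈ Sδ then β j else 0) i - f0 i) ^ 2) / n)
      ∧ Real.sqrt ((∑ i, (X.mulVec (fun j => if j ∈ Sδ then β j else 0) i - f0 i) ^ 2) / n)
        ≤ Real.sqrt ((∑ i, (X.mulVec b0 i - f0 i) ^ 2) / n)
          + Real.sqrt ((⌈δ2 ^ 2 / (δ ^ 2 * S0.card) + 1⌉₊ : ℝ)) * Λs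
              * (2 * δ2 + δ * Real.sqrt (S0.card)) := by
  set βS : Fin p → ℝ := fun j => if j ∈ Sδ then β j else 0
  have hβS : ∀ j ∉ Sδ, βS j = 0 := fun j hj => if_neg hj
  set N := ⌈δ2 ^ 2 / (δ ^ 2 * #S0) + 1⌉₊
  replace hδ2 : δ2 = ‖WithLp.toLp 2 (β - b0)‖ := hδ2.trans (norm_toLp_eq_sqrt _).symm
  refine ⟨?_, ?_⟩
  · change empNorm (X *ᵥ c - f0) ≤ empNorm (X *ᵥ βS - f0)
    simp only [empNorm_eq]
    gcongr
    exact norm_mulVec_sub_le_of_orthogonal X f0 hcsupp hβS hcproj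
  · change empNorm (X *ᵥ βS - f0) ≤ empNorm (X *ᵥ b0 - f0) + _
    have hsupp : ∀ j ∉ Sδ ∪ S0, (βS - b0) j = 0 := fun j hj => by
      simp only [mem_union, not_or] at hj
      simp [hβS j hj.1, hb0supp j hj.2]
    have hcard : #(Sδ ∪ S0) ≤ N * #S0 := by
      rw [← card_sdiff_add_card]
      refine add_le_ceil_mul hδ hS0.card_pos ?_
      exact hδ2 ▸ card_sdiff_mul_sq_le hδ.le (fun j hj => (hSδ j).mp hj) hb0supp
    have hsparse := le_sqrt_mul_of_sparse_le (q := fun γ => empNorm (X *ᵥ γ))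
      (fun x y => by simpa only [mulVec_add] using empNorm_add_le _ _) hΛs0
      (fun T hT γ hγ => by rw [norm_toLp_eq_sqrt]; exact hΛs T hT γ hγ) N _ hcard _ hsupp
    have hγ := norm_threshold_sub_le hδ.le (fun j hj => not_lt.mp (mt (hSδ j).mpr hj)) hb0supp
    calc empNorm (X *ᵥ βS - f0) = empNorm ((X *ᵥ b0 - f0) + X *ᵥ (βS - b0)) := by
          rw [mulVec_sub]; abel_nf
      _ ≤ empNorm (X *ᵥ b0 - f0) + empNorm (X *ᵥ (βS - b0)) := empNorm_add_le _ _
      _ ≤ empNorm (X *ᵥ b0 - f0) + √N * Λs * ‖WithLp.toLp 2 (βS - b0)‖ := by gcongr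
      _ ≤ empNorm (X *ᵥ b0 - f0) + √N * Λs * (2 * δ2 + δ * √(#S0)) := by
          gcongr
          linarith [norm_nonneg (WithLp.toLp 2 (β - b0))]

/-- Prediction-error inequality of Lemma `betterthres` for the refitted thresholded Lasso. -/
theorem thresholded_prediction_error
    (n p : ℕ) (hn : 0 < n)
    (X : Matrix (Fin n) (Fin p) ℝ) (f0 : Fin n → ℝ)
    (S0 : Finset (Fin p)) (hS0 : S0.Nonempty)
    (b0 : Fin p → ℝ)
    (hb0supp : ∀ j ∉ S0, b0 j = 0)
    (hb0proj : ∀ j ∈ S0, ∑ i, (X.mulVec b0 i - f0 i) * X i j = 0)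
    (β : Fin p → ℝ)
    (δ2 : ℝ) (hδ2 : δ2 = Real.sqrt (∑ j, (β j - b0 j) ^ 2))
    (δ : ℝ) (hδ : 0 < δ)
    (Sδ : Finset (Fin p)) (hSδ : ∀ j, j ∈ Sδ ↔ δ < |β j|)
    -- `X.mulVec c` is the orthogonal projection of `f0` onto `span {ψ_j : j ∈ Sδ}`
    (c : Fin p → ℝ)
    (hcsupp : ∀ j ∉ Sδ, c j = 0)
    (hcproj : ∀ j ∈ Sδ, ∑ i, (X.mulVec c i - f0 i) * X i j = 0)
    (Λs : ℝ) (hΛs0 : 0 ≤ Λs)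
    (hΛs : ∀ T : Finset (Fin p), T.card ≤ S0.card →
      ∀ γ : Fin p → ℝ, (∀ j ∉ T, γ j = 0) →
      Real.sqrt ((∑ i, (X.mulVec γ i) ^ 2) / n) ≤ Λs * Real.sqrt (∑ j, (γ j) ^ 2)) :
    Real.sqrt ((∑ i, (X.mulVec c i - f0 i) ^ 2) / n)
        ≤ Real.sqrt ((∑ i, (X.mulVec (fun j => if j ∈ Sδ then β j else 0) i - f0 i) ^ 2) / n)
      ∧ Real.sqrt ((∑ i, (X.mulVec (fun j => if j ∈ Sδ then β j else 0) i - f0 i) ^ 2) / n)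
        ≤ Real.sqrt ((∑ i, (X.mulVec b0 i - f0 i) ^ 2) / n)
          + Real.sqrt ((⌈δ2 ^ 2 / (δ ^ 2 * S0.card) + 1⌉₊ : ℝ)) * Λs
              * (2 * δ2 + δ * Real.sqrt (S0.card)) :=
  thresholded_prediction_error_general n p X f0 S0 hS0 b0 hb0supp β δ2 hδ2 δ hδ Sδ hSδ c hcsupp
    hcproj Λs hΛs0 hΛs
end
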